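/- arXiv:2602.22190 — 3 statements merged into one kernel-verified Lean document; each statement's English description precedes it below -/
import Mathlib

section
/- Consider a goal-conditioned MDP with finite horizon H, finite state space S, and finite action set A. Suppose that whenever an episode under policy π fails, there exists some step t ≤ H with a_t ∉ A*(s_t). Let d_{π,t} denote the state visitation distribution at step t, assume supp(d_{π,t}) ⊆ supp(d_μ) for all t, and define C(π) = max_t sup_{s: d_μ(s)>0} d_{π,t}(s)/d_μ(s), M_off(π) = E_{s∼d_μ}[π(ã(s)|s)] where ã(s) ∈ A*(s) is the demonstrated action, and η̄_π = E_{s∼d_μ}[π(A*(s)\{ã(s)} | s)]. Then the success probability J(π) satisfies J(π) ≥ 1 − H·C(π)·(1 − M_off(π) − η̄_π). -/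
/-!
A failed episode takes an invalid action at some step, so by the union bound the failure
probability is at most the sum over steps of the mass of invalid actions. At step `t` this mass is
`∑ s, d_{π,t}(s) π(A \ A*(s) | s)`; the coverage bound `d_{π,t} ≤ C d_μ` moves it to the offline
distribution, where `π(A \ A*(s) | s) = 1 - π(ã(s) | s) - π(A*(s) \ {ã(s)} | s)`.
-/

open Finset

namespace Finset

lemma sum_filter_le_sum_sum_filter_of_exists {α ι : Type*} [Fintype α] [Fintype ι]
    {p : α → ℝ} (hp : ∀ x, 0 ≤ p x) {P : α → Prop} [DecidablePred P]
    {Q : ι → α → Prop} [∀ i, DecidablePred (Q i)] (hPQ : ∀ x, 0 < p x → P x → ∃ i, Q i x) :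
    ∑ x ∈ univ.filter P, p x ≤ ∑ i, ∑ x ∈ univ.filter (Q i), p x := by
  have hpointwise : ∀ x ∈ univ.filter P, p x ≤ ∑ i, if Q i x then p x else 0 := by
    intro x hx
    rcases (hp x).lt_or_eq with hpos | hzero
    · obtain ⟨i, hi⟩ := hPQ x hpos (mem_filter.mp hx).2
      calc p x = if Q i x then p x else 0 := (if_pos hi).symm
        _ ≤ ∑ i, if Q i x then p x else 0 :=
          single_le_sum (f := fun j => if Q j x then p x else 0)
            (fun j _ => ite_nonneg (hp x) le_rfl) (mem_univ i)
    · rw [← hzero]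
      exact sum_nonneg fun i _ => ite_nonneg le_rfl le_rfl
  calc ∑ x ∈ univ.filter P, p x
      ≤ ∑ x ∈ univ.filter P, ∑ i, if Q i x then p x else 0 := sum_le_sum hpointwise
    _ ≤ ∑ x, ∑ i, if Q i x then p x else 0 :=
      sum_le_sum_of_subset_of_nonneg (filter_subset _ _)
        fun x _ _ => sum_nonneg fun i _ => ite_nonneg (hp x) le_rfl
    _ = ∑ i, ∑ x ∈ univ.filter (Q i), p x := by
      rw [sum_comm]; simp only [sum_filter]

lemma sum_mul_le_mul_sum_mul_of_le_mul {ι : Type*} [Fintype ι] {d e q : ι → ℝ} {C : ℝ}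
    (he : ∀ i, 0 ≤ e i) (hq : ∀ i, 0 ≤ q i) (hsupp : ∀ i, 0 < d i → 0 < e i)
    (hle : ∀ i, 0 < e i → d i ≤ C * e i) :
    ∑ i, d i * q i ≤ C * ∑ i, e i * q i := by
  rw [mul_sum]
  refine sum_le_sum fun i _ => ?_
  rw [← mul_assoc]
  refine mul_le_mul_of_nonneg_right ?_ (hq i)
  rcases (he i).lt_or_eq with hpos | hzero
  · exact hle i hpos
  · rw [← hzero, mul_zero]
    exact not_lt.mp fun hd => (hsupp i hd).ne' hzero.symm

lemma sum_compl_eq_one_sub {α : Type*} [Fintype α] [DecidableEq α] {q : α → ℝ}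
    (hq : ∑ a, q a = 1) {s : Finset α} {a : α} (ha : a ∈ s) :
    ∑ b ∈ sᶜ, q b = 1 - q a - ∑ b ∈ s.erase a, q b := by
  rw [← hq, ← sum_compl_add_sum s, ← add_sum_erase s q ha]
  ring

lemma sum_filter_notMem_eq_sum_mul_sum_compl {Ω S A : Type*} [Fintype Ω] [Fintype S]
    [Fintype A] [DecidableEq S] [DecidableEq A] {p : Ω → ℝ} {X : Ω → S × A}
    {d : S → ℝ} {π : S → A → ℝ}
    (hjoint : ∀ s a, ∑ ω ∈ univ.filter (fun ω => X ω = (s, a)), p ω = d s * π s a)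
    (Astar : S → Finset A) :
    ∑ ω ∈ univ.filter (fun ω => (X ω).2 ∉ Astar (X ω).1), p ω
      = ∑ s, d s * ∑ a ∈ (Astar s)ᶜ, π s a := by
  calc ∑ ω ∈ univ.filter (fun ω => (X ω).2 ∉ Astar (X ω).1), p ω
      = ∑ x ∈ univ.filter (fun x : S × A => x.2 ∉ Astar x.1),
          ∑ ω ∈ univ.filter (fun ω => X ω = x), p ω := by
        rw [sum_fiberwise_eq_sum_filter]; simp only [mem_filter, mem_univ, true_and]
    _ = ∑ x ∈ univ.filter (fun x : S × A => x.2 ∉ Astar x.1), d x.1 * π x.1 x.2 :=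
        sum_congr rfl fun x _ => hjoint x.1 x.2
    _ = ∑ s, d s * ∑ a ∈ (Astar s)ᶜ, π s a := by
        simp only [Fintype.sum_prod_type, sum_filter, mul_sum]
        refine sum_congr rfl fun s _ => ?_
        rw [← sum_filter]
        congr 1
        ext a
        simp

end Finset

theorem stmt1_general {S A : Type*} [Fintype S] [Fintype A] [DecidableEq S] [DecidableEq A]
    (H : ℕ) (p : (Fin H → S × A) → ℝ)
    (success : (Fin H → S × A) → Prop) [DecidablePred success]
    (π : S → A → ℝ) (dμ : S → ℝ) (dπ : Fin H → S → ℝ)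
    (Astar : S → Finset A) (atilde : S → A) (C : ℝ)
    (hp0 : ∀ τ, 0 ≤ p τ) (hp1 : ∑ τ, p τ = 1)
    (hdμ0 : ∀ s, 0 ≤ dμ s) (hdμ1 : ∑ s, dμ s = 1)
    (hπ0 : ∀ s a, 0 ≤ π s a) (hπ1 : ∀ s, ∑ a, π s a = 1)
    (hat : ∀ s, atilde s ∈ Astar s)
    -- Markov policy consistency: P(s_t = s, a_t = a) = d_{π,t}(s)·π(a|s)
    (hpolicy : ∀ t s a,
      ∑ τ ∈ Finset.univ.filter (fun τ => τ t = (s, a)), p τ = dπ t s * π s a)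
    -- failure implies some step takes an invalid action
    (hfail : ∀ τ, 0 < p τ → ¬ success τ → ∃ t, (τ t).2 ∉ Astar ((τ t).1))
    -- support condition supp(d_{π,t}) ⊆ supp(d_μ)
    (hsupp : ∀ t s, 0 < dπ t s → 0 < dμ s)
    -- occupancy mismatch C(π)
    (hC : ∀ t s, 0 < dμ s → dπ t s ≤ C * dμ s) :
    1 - (H : ℝ) * C * (1 - (∑ s, dμ s * π s (atilde s))
        - ∑ s, dμ s * ∑ a ∈ (Astar s).erase (atilde s), π s a)
      ≤ ∑ τ ∈ Finset.univ.filter (fun τ => success τ), p τ := by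
  set X := 1 - (∑ s, dμ s * π s (atilde s))
    - ∑ s, dμ s * ∑ a ∈ (Astar s).erase (atilde s), π s a
  have hinvalid : ∀ t : Fin H,
      ∑ τ ∈ univ.filter (fun τ => (τ t).2 ∉ Astar (τ t).1), p τ ≤ C * X := by
    intro t
    rw [sum_filter_notMem_eq_sum_mul_sum_compl (hpolicy t)]
    calc ∑ s, dπ t s * ∑ a ∈ (Astar s)ᶜ, π s a
        ≤ C * ∑ s, dμ s * ∑ a ∈ (Astar s)ᶜ, π s a :=
          sum_mul_le_mul_sum_mul_of_le_mul hdμ0 (fun s => sum_nonneg fun a _ => hπ0 s a)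
            (hsupp t) (hC t)
      _ = C * X := by
        simp only [fun s => sum_compl_eq_one_sub (hπ1 s) (hat s), mul_sub, mul_one,
          sum_sub_distrib, hdμ1, X]
  have hfailure : ∑ τ ∈ univ.filter (fun τ => ¬ success τ), p τ ≤ H * C * X :=
    calc ∑ τ ∈ univ.filter (fun τ => ¬ success τ), p τ
        ≤ ∑ t, ∑ τ ∈ univ.filter (fun τ => (τ t).2 ∉ Astar (τ t).1), p τ :=
          sum_filter_le_sum_sum_filter_of_exists hp0 hfail
      _ ≤ ∑ _t : Fin H, C * X := sum_le_sum fun t _ => hinvalid t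
      _ = H * C * X := by rw [sum_const, card_univ, Fintype.card_fin, nsmul_eq_mul, mul_assoc]
  linarith [sum_filter_add_sum_filter_not univ success p]

/-- Offline-to-online bound under partial verifiability:
`J(π) ≥ 1 − H·C(π)·(1 − M_off(π) − η̄_π)`. -/
theorem stmt1 {S A : Type*} [Fintype S] [Fintype A] [DecidableEq S] [DecidableEq A]
    (H : ℕ) (p : (Fin H → S × A) → ℝ)
    (success : (Fin H → S × A) → Prop) [DecidablePred success]
    (π : S → A → ℝ) (dμ : S → ℝ) (dπ : Fin H → S → ℝ)
    (Astar : S → Finset A) (atilde : S → A) (C : ℝ)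
    (hp0 : ∀ τ, 0 ≤ p τ) (hp1 : ∑ τ, p τ = 1)
    (hdμ0 : ∀ s, 0 ≤ dμ s) (hdμ1 : ∑ s, dμ s = 1)
    (hπ0 : ∀ s a, 0 ≤ π s a) (hπ1 : ∀ s, ∑ a, π s a = 1)
    (hat : ∀ s, atilde s ∈ Astar s)
    -- state visitation distribution at step t
    (hvisit : ∀ t s, dπ t s = ∑ τ ∈ Finset.univ.filter (fun τ => (τ t).1 = s), p τ)
    -- Markov policy consistency: P(s_t = s, a_t = a) = d_{π,t}(s)·π(a|s)
    (hpolicy : ∀ t s a,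
      ∑ τ ∈ Finset.univ.filter (fun τ => τ t = (s, a)), p τ = dπ t s * π s a)
    -- failure implies some step takes an invalid action
    (hfail : ∀ τ, 0 < p τ → ¬ success τ → ∃ t, (τ t).2 ∉ Astar ((τ t).1))
    -- support condition supp(d_{π,t}) ⊆ supp(d_μ)
    (hsupp : ∀ t s, 0 < dπ t s → 0 < dμ s)
    -- occupancy mismatch C(π)
    (hC : ∀ t s, 0 < dμ s → dπ t s ≤ C * dμ s) :
    1 - (H : ℝ) * C * (1 - (∑ s, dμ s * π s (atilde s))
        - ∑ s, dμ s * ∑ a ∈ (Astar s).erase (atilde s), π s a)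
      ≤ ∑ τ ∈ Finset.univ.filter (fun τ => success τ), p τ :=
  stmt1_general H p success π dμ dπ Astar atilde C hp0 hp1 hdμ0 hdμ1 hπ0 hπ1 hat hpolicy hfail hsupp
    hC
end

section
/- Let S and A be finite sets, P a transition kernel, and π, π_ref two policies satisfying KL(π(·|s)‖π_ref(·|s)) ≤ ε for every state s. Let d_{π,t} and d_{π_ref,t} be the state distributions at step t induced by running π and π_ref respectively from the same initial distribution. Then for every t ≥ 0, ‖d_{π,t} − d_{π_ref,t}‖₁ ≤ t·√(2ε). -/
/-!
Pinsker's inequality `∑ |p - q| ≤ √(2 KL(p‖q))` follows from the pointwise bound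
`3 (x - 1)² ≤ 2 (x + 2) klFun x` (the difference is decreasing on `[0, 1]`, increasing on
`[1, ∞)` and vanishes at `1`) and Cauchy–Schwarz with the weights `2 (p + 2q) / 3`, which sum
to `2`. Averaging over actions, each row of the state kernel `P_π` is then `√(2ε)`-close in `ℓ¹`
to the corresponding row of `P_{π_ref}`. Writing `d P_π - e P_ref = (d - e) P_π + e (P_π - P_ref)`,
the first term does not increase the `ℓ¹` norm because `P_π` is stochastic, and the second has
norm at most `√(2ε)` because `e` is a probability vector; so each step adds at most `√(2ε)`.
-/

open Finset InformationTheory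

section Pinsker

open Real Set

lemma hasDerivAt_add_one_mul_log_sub {x : ℝ} (hx : 0 < x) :
    HasDerivAt (fun x ↦ (x + 1) * log x - 2 * (x - 1)) (log x + x⁻¹ - 1) x := by
  have := (((hasDerivAt_id x).add_const 1).mul (hasDerivAt_log hx.ne')).sub
      (((hasDerivAt_id x).sub_const 1).const_mul 2)
  refine this.congr_deriv ?_
  simp only [id]
  field_simp
  ring

lemma hasDerivAt_mul_klFun_sub_sq {x : ℝ} (hx : 0 < x) :
    HasDerivAt (fun x ↦ 2 * (x + 2) * klFun x - 3 * (x - 1) ^ 2)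
      (4 * ((x + 1) * log x - 2 * (x - 1))) x := by
  have := ((((hasDerivAt_id x).add_const 2).const_mul 2).mul (hasDerivAt_klFun hx.ne')).sub
    ((((hasDerivAt_id x).sub_const 1).pow 2).const_mul 3)
  refine this.congr_deriv ?_
  simp only [klFun, id]
  ring

lemma monotoneOn_add_one_mul_log_sub :
    MonotoneOn (fun x : ℝ ↦ (x + 1) * log x - 2 * (x - 1)) (Ioi 0) := by
  refine monotoneOn_of_hasDerivWithinAt_nonneg (f' := fun x ↦ log x + x⁻¹ - 1) (convex_Ioi 0)
    (fun x hx ↦ (hasDerivAt_add_one_mul_log_sub hx).continuousAt.continuousWithinAt)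
    (fun x hx ↦ ?_) (fun x hx ↦ ?_) <;> rw [interior_Ioi] at hx
  · exact (hasDerivAt_add_one_mul_log_sub hx).hasDerivWithinAt
  · linarith [one_sub_inv_le_log_of_pos hx]

lemma three_mul_sq_sub_one_le_klFun {x : ℝ} (hx : 0 ≤ x) :
    3 * (x - 1) ^ 2 ≤ 2 * (x + 2) * klFun x := by
  set G : ℝ → ℝ := fun x ↦ 2 * (x + 2) * klFun x - 3 * (x - 1) ^ 2
  set G' : ℝ → ℝ := fun x ↦ 4 * ((x + 1) * log x - 2 * (x - 1))
  have hG : Continuous G := by fun_prop (disch := exact continuous_klFun)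
  have hG1 : G 1 = 0 := by simp [G, klFun_one]
  have hG' {y : ℝ} (hy : 0 < y) : HasDerivAt G (G' y) y := hasDerivAt_mul_klFun_sub_sq hy
  have hH := @monotoneOn_add_one_mul_log_sub
  suffices 0 ≤ G x by simpa [G, sub_nonneg] using this
  rcases le_total 1 x with h1 | h1
  · refine hG1 ▸ monotoneOn_of_hasDerivWithinAt_nonneg (f' := G') (convex_Ici 1)
      hG.continuousOn (fun y hy ↦ ?_) (fun y hy ↦ ?_) self_mem_Ici h1 h1
      <;> rw [interior_Ici] at hy
    · exact (hG' (one_pos.trans hy)).hasDerivWithinAt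
    · have := hH (mem_Ioi.2 one_pos) (mem_Ioi.2 (one_pos.trans hy)) hy.le
      norm_num at this
      linarith
  · refine hG1 ▸ antitoneOn_of_hasDerivWithinAt_nonpos (f' := G') (convex_Icc 0 1)
      hG.continuousOn (fun y hy ↦ ?_) (fun y hy ↦ ?_) ⟨hx, h1⟩ (right_mem_Icc.2 zero_le_one) h1
      <;> rw [interior_Icc] at hy
    · exact (hG' hy.1).hasDerivWithinAt
    · have := hH (mem_Ioi.2 hy.1) (mem_Ioi.2 one_pos) hy.2.le
      norm_num at this
      linarith

lemma mul_klFun_div {p q : ℝ} (habs : q = 0 → p = 0) :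
    q * klFun (p / q) = p * log (p / q) - p + q := by
  rcases eq_or_ne q 0 with rfl | hq
  · simp [habs rfl]
  · rw [klFun]
    field_simp
    ring

lemma sq_sub_le_mul_mul_klFun_div {p q : ℝ} (hp : 0 ≤ p) (hq : 0 ≤ q) (habs : q = 0 → p = 0) :
    (p - q) ^ 2 ≤ 2 * (p + 2 * q) / 3 * (q * klFun (p / q)) := by
  rcases hq.eq_or_lt with rfl | hq
  · simp [habs rfl]
  · have key := three_mul_sq_sub_one_le_klFun (div_nonneg hp hq.le)
    obtain ⟨x, rfl⟩ : ∃ x, p = x * q := ⟨p / q, (div_mul_cancel₀ p hq.ne').symm⟩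
    rw [mul_div_cancel_right₀ x hq.ne'] at key ⊢
    nlinarith [mul_le_mul_of_nonneg_left key (sq_nonneg q)]

theorem sum_abs_sub_le_sqrt_two_mul_kl {ι : Type*} [Fintype ι] {p q : ι → ℝ} {ε : ℝ}
    (hp : p ∈ stdSimplex ℝ ι) (hq : q ∈ stdSimplex ℝ ι) (habs : ∀ i, q i = 0 → p i = 0)
    (hKL : ∑ i, p i * log (p i / q i) ≤ ε) :
    ∑ i, |p i - q i| ≤ √(2 * ε) := by
  have hkl : ∑ i, q i * klFun (p i / q i) ≤ ε := by
    simp only [mul_klFun_div (habs _), sum_add_distrib, sum_sub_distrib, hp.2, hq.2]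
    linarith
  have hweights : ∑ i, 2 * (p i + 2 * q i) / 3 = 2 := by
    simp only [← sum_div, ← mul_sum, sum_add_distrib, hp.2, hq.2]
    norm_num
  have hCS : (∑ i, |p i - q i|) ^ 2 ≤
      (∑ i, 2 * (p i + 2 * q i) / 3) * ∑ i, q i * klFun (p i / q i) :=
    sum_sq_le_sum_mul_sum_of_sq_le_mul _
      (fun i _ ↦ by have := hp.1 i; have := hq.1 i; positivity)
      (fun i _ ↦ mul_nonneg (hq.1 i) (klFun_nonneg (div_nonneg (hp.1 i) (hq.1 i))))
      (fun i _ ↦ (sq_abs _).trans_le (sq_sub_le_mul_mul_klFun_div (hp.1 i) (hq.1 i) (habs i)))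
  exact le_sqrt_of_sq_le (hCS.trans (by rw [hweights]; linarith))

end Pinsker

section Propagation

variable {ι κ : Type*} [Fintype ι] [Fintype κ]

lemma sum_abs_sum_mul_le (v : ι → ℝ) (K : ι → κ → ℝ) :
    ∑ j, |∑ i, v i * K i j| ≤ ∑ i, |v i| * ∑ j, |K i j| :=
  calc ∑ j, |∑ i, v i * K i j| ≤ ∑ j, ∑ i, |v i| * |K i j| :=
        sum_le_sum fun j _ ↦ (abs_sum_le_sum_abs _ _).trans_eq (by simp only [abs_mul])
    _ = ∑ i, |v i| * ∑ j, |K i j| := by rw [sum_comm]; simp only [mul_sum]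

lemma sum_abs_sum_mul_sub_sum_mul_le {d e : ι → ℝ} {M N : ι → κ → ℝ}
    (hM0 : ∀ i j, 0 ≤ M i j) (hM1 : ∀ i, ∑ j, M i j = 1) (he : e ∈ stdSimplex ℝ ι) {δ : ℝ}
    (hMN : ∀ i, ∑ j, |M i j - N i j| ≤ δ) :
    ∑ j, |∑ i, d i * M i j - ∑ i, e i * N i j| ≤ ∑ i, |d i - e i| + δ := by
  have hsplit : ∀ j, ∑ i, d i * M i j - ∑ i, e i * N i j =
      ∑ i, (d i - e i) * M i j + ∑ i, e i * (M i j - N i j) := fun j ↦ by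
    simp only [← sum_sub_distrib, ← sum_add_distrib]
    exact sum_congr rfl fun i _ ↦ by ring
  have hcontract := sum_abs_sum_mul_le (fun i ↦ d i - e i) M
  have hperturb := sum_abs_sum_mul_le e (fun i j ↦ M i j - N i j)
  simp only [abs_of_nonneg (hM0 _ _), hM1, mul_one] at hcontract
  calc ∑ j, |∑ i, d i * M i j - ∑ i, e i * N i j|
      ≤ ∑ j, (|∑ i, (d i - e i) * M i j| + |∑ i, e i * (M i j - N i j)|) :=
        sum_le_sum fun j _ ↦ hsplit j ▸ abs_add_le _ _
    _ ≤ ∑ i, |d i - e i| + ∑ i, e i * δ := by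
        rw [sum_add_distrib]
        refine add_le_add hcontract (hperturb.trans (sum_le_sum fun i _ ↦ ?_))
        rw [abs_of_nonneg (he.1 i)]
        exact mul_le_mul_of_nonneg_left (hMN i) (he.1 i)
    _ = ∑ i, |d i - e i| + δ := by rw [← sum_mul, he.2, one_mul]

lemma mem_stdSimplex_of_forall_eq_sum_mul {d : ℕ → ι → ℝ} {M : ι → ι → ℝ}
    (hM0 : ∀ i j, 0 ≤ M i j) (hM1 : ∀ i, ∑ j, M i j = 1) (hd0 : d 0 ∈ stdSimplex ℝ ι)
    (hd : ∀ t j, d (t + 1) j = ∑ i, d t i * M i j) (t : ℕ) : d t ∈ stdSimplex ℝ ι := by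
  induction t with
  | zero => exact hd0
  | succ t ih =>
    refine ⟨fun j ↦ (hd t j).symm ▸ sum_nonneg fun i _ ↦ mul_nonneg (ih.1 i) (hM0 i j), ?_⟩
    simp only [hd]
    rw [sum_comm]
    simp only [← mul_sum, hM1, mul_one, ih.2]

end Propagation

section PolicyKernel

variable {S A : Type*} [Fintype A]

def policyKernel (π : S → A → ℝ) (P : S → A → S → ℝ) (s s' : S) : ℝ :=
  ∑ a, π s a * P s a s'

variable {P : S → A → S → ℝ} {π ρ : S → A → ℝ}

lemma policyKernel_nonneg (hP0 : ∀ s a s', 0 ≤ P s a s') (hπ0 : ∀ s a, 0 ≤ π s a) (s s' : S) :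
    0 ≤ policyKernel π P s s' :=
  sum_nonneg fun a _ ↦ mul_nonneg (hπ0 s a) (hP0 s a s')

variable [Fintype S]

lemma sum_policyKernel (hP1 : ∀ s a, ∑ s', P s a s' = 1) (hπ1 : ∀ s, ∑ a, π s a = 1) (s : S) :
    ∑ s', policyKernel π P s s' = 1 := by
  simp only [policyKernel]
  rw [sum_comm]
  simp only [← mul_sum, hP1, mul_one, hπ1]

lemma sum_abs_policyKernel_sub_le (hP0 : ∀ s a s', 0 ≤ P s a s')
    (hP1 : ∀ s a, ∑ s', P s a s' = 1) (s : S) :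
    ∑ s', |policyKernel π P s s' - policyKernel ρ P s s'| ≤ ∑ a, |π s a - ρ s a| := by
  have := sum_abs_sum_mul_le (fun a ↦ π s a - ρ s a) (P s)
  simp only [abs_of_nonneg (hP0 s _ _), hP1, mul_one, sub_mul, sum_sub_distrib] at this
  exact this

end PolicyKernel

/-- Telescoping bound: per-state `KL(π(·|s)‖π_ref(·|s)) ≤ ε` implies
`‖d_{π,t} − d_{π_ref,t}‖₁ ≤ t·√(2ε)` for all `t`. -/
theorem stmt5 {S A : Type*} [Fintype S] [Fintype A]
    (P : S → A → S → ℝ) (π πref : S → A → ℝ) (ε : ℝ)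
    (dπ dref : ℕ → S → ℝ)
    (hP0 : ∀ s a s', 0 ≤ P s a s') (hP1 : ∀ s a, ∑ s', P s a s' = 1)
    (hπ0 : ∀ s a, 0 ≤ π s a) (hπ1 : ∀ s, ∑ a, π s a = 1)
    (href0 : ∀ s a, 0 ≤ πref s a) (href1 : ∀ s, ∑ a, πref s a = 1)
    (habs : ∀ s a, πref s a = 0 → π s a = 0)
    (hKL : ∀ s, ∑ a, π s a * Real.log (π s a / πref s a) ≤ ε)
    -- same initial distribution
    (hinit0 : ∀ s, 0 ≤ dref 0 s) (hinit1 : ∑ s, dref 0 s = 1)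
    (h0 : ∀ s, dπ 0 s = dref 0 s)
    -- state distribution recursions
    (hrecπ : ∀ t s', dπ (t + 1) s' = ∑ s, dπ t s * ∑ a, π s a * P s a s')
    (hrecref : ∀ t s', dref (t + 1) s' = ∑ s, dref t s * ∑ a, πref s a * P s a s') :
    ∀ t : ℕ, ∑ s, |dπ t s - dref t s| ≤ (t : ℝ) * Real.sqrt (2 * ε) := by
  have hkernel : ∀ s, ∑ s', |policyKernel π P s s' - policyKernel πref P s s'| ≤ √(2 * ε) :=
    fun s ↦ (sum_abs_policyKernel_sub_le hP0 hP1 s).trans <|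
      sum_abs_sub_le_sqrt_two_mul_kl ⟨hπ0 s, hπ1 s⟩ ⟨href0 s, href1 s⟩ (habs s) (hKL s)
  have hdref : ∀ t, dref t ∈ stdSimplex ℝ S :=
    mem_stdSimplex_of_forall_eq_sum_mul (policyKernel_nonneg hP0 href0)
      (sum_policyKernel hP1 href1) ⟨hinit0, hinit1⟩ hrecref
  intro t
  induction t with
  | zero => simp [h0]
  | succ t ih =>
    calc ∑ s', |dπ (t + 1) s' - dref (t + 1) s'|
        ≤ ∑ s, |dπ t s - dref t s| + √(2 * ε) := by
          simp only [hrecπ, hrecref]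
          exact sum_abs_sum_mul_sub_sum_mul_le (policyKernel_nonneg hP0 hπ0)
            (sum_policyKernel hP1 hπ1) (hdref t) hkernel
      _ ≤ (t + 1 : ℕ) * √(2 * ε) := by push_cast; linarith
end

section
/- Combine the previous two lemmas: if KL(π(·|s)‖π_ref(·|s)) ≤ ε for all s, d_{π_ref,t} ≪ d_μ for all t ∈ [H], ρ = inf{d_μ(s) : d_μ(s) > 0} > 0, and C(π_ref) = max_t sup_{s: d_μ(s)>0} d_{π_ref,t}(s)/d_μ(s), then the occupancy mismatch of π satisfies C(π) ≤ C(π_ref) + H√(2ε)/ρ, provided d_{π,t} ≪ d_μ for all t. -/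
/-!
Pinsker's inequality turns the per-state KL bound into `∑ₐ |π(a|s) - π_ref(a|s)| ≤ √(2ε)`, so the
state-transition matrices `K_π`, `K_ref` of the two policies are `√(2ε)`-close row by row in ℓ¹.
Since `d K_π - e K_ref = (d - e) K_ref + d (K_π - K_ref)`, each step adds at most `√(2ε)` to
`‖d_{π,t} - d_{ref,t}‖₁`, so `d_{π,t}(s) ≤ d_{ref,t}(s) + H√(2ε)`; dividing by `d_μ(s) ≥ ρ` gives
the bound. Pinsker itself follows from `3(u - 1)² ≤ 2(u + 2)·klFun u` and Cauchy–Schwarz.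
-/

open Finset Matrix InformationTheory

section Pinsker

open Real

/- `2(u - 1)/(u + 1)` is the first term of the series of `log u` in powers of `(u - 1)/(u + 1)`. -/
theorem two_mul_sub_one_le_add_one_mul_log {u : ℝ} (hu : 1 ≤ u) :
    2 * (u - 1) ≤ (u + 1) * log u := by
  have ha : 0 ≤ u - 1 := sub_nonneg.2 hu
  have hfirst := le_hasSum (hasSum_log_one_add ha) 0 fun k _ => by positivity
  rw [add_sub_cancel, show u - 1 + 2 = u + 1 by ring] at hfirst
  norm_num at hfirst
  rwa [mul_div_assoc', div_le_iff₀ (by linarith), mul_comm (log u)] at hfirst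

theorem add_one_mul_log_le_two_mul_sub_one {u : ℝ} (h0 : 0 < u) (hu : u ≤ 1) :
    (u + 1) * log u ≤ 2 * (u - 1) := by
  have h := two_mul_sub_one_le_add_one_mul_log (one_le_inv₀ h0 |>.2 hu)
  rw [log_inv] at h
  have h' := mul_le_mul_of_nonneg_left h h0.le
  have e1 : u * (2 * (u⁻¹ - 1)) = 2 * (1 - u) := by field_simp
  have e2 : u * ((u⁻¹ + 1) * -log u) = -((u + 1) * log u) := by field_simp; ring
  linarith

theorem hasDerivAt_klFun_sub (u : ℝ) (hu : u ≠ 0) :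
    HasDerivAt (fun u => 2 * (u + 2) * klFun u - 3 * (u - 1) ^ 2)
      (4 * ((u + 1) * log u - 2 * (u - 1))) u := by
  have := ((((hasDerivAt_id u).add_const 2).const_mul 2).mul (hasDerivAt_klFun hu)).sub
    ((((hasDerivAt_id u).sub_const 1).pow 2).const_mul 3)
  refine this.congr_deriv ?_
  simp only [klFun_apply, id]
  ring

theorem three_mul_sub_one_sq_le_klFun {u : ℝ} (hu : 0 ≤ u) :
    3 * (u - 1) ^ 2 ≤ 2 * (u + 2) * klFun u := by
  have hcont : Continuous fun u : ℝ => 2 * (u + 2) * klFun u - 3 * (u - 1) ^ 2 := by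
    have := continuous_klFun
    fun_prop
  have hdiff : ∀ s : Set ℝ, (0 : ℝ) ∉ s →
      DifferentiableOn ℝ (fun u : ℝ => 2 * (u + 2) * klFun u - 3 * (u - 1) ^ 2) s :=
    fun s hs x hx => (hasDerivAt_klFun_sub x (ne_of_mem_of_not_mem hx hs)).differentiableAt
      |>.differentiableWithinAt
  have hmin := isMinOn_Ici_of_deriv (a := 0) (b := 1) hcont.continuousAt hcont.continuousAt
    (hdiff _ (by simp)) (hdiff _ (by simp))
    (fun x hx => by
      rw [(hasDerivAt_klFun_sub x hx.1.ne').deriv]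
      linarith [add_one_mul_log_le_two_mul_sub_one hx.1 hx.2.le])
    (fun x hx => by
      rw [(hasDerivAt_klFun_sub x (by linarith [hx.out])).deriv]
      linarith [two_mul_sub_one_le_add_one_mul_log (le_of_lt hx)])
  have := hmin (Set.mem_Ici.2 hu)
  simp only [Set.mem_ofPred_eq, klFun_one] at this
  linarith

theorem mul_log_div_eq_mul_klFun {p q : ℝ} (hq : 0 ≤ q) (habs : q = 0 → p = 0) :
    p * log (p / q) = q * klFun (p / q) + p - q := by
  rcases hq.eq_or_lt with rfl | hq
  · simp [habs rfl]
  · rw [klFun_apply]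
    field_simp
    ring

theorem three_mul_sub_sq_le_mul_klFun {p q : ℝ} (hp : 0 ≤ p) (hq : 0 ≤ q)
    (habs : q = 0 → p = 0) :
    3 * (p - q) ^ 2 ≤ 2 * (p + 2 * q) * (q * klFun (p / q)) := by
  rcases hq.eq_or_lt with rfl | hq
  · simp [habs rfl]
  · have h := mul_le_mul_of_nonneg_left (three_mul_sub_one_sq_le_klFun (div_nonneg hp hq.le))
      (sq_nonneg q)
    have e1 : q ^ 2 * (3 * (p / q - 1) ^ 2) = 3 * (p - q) ^ 2 := by field_simp
    have e2 : q ^ 2 * (2 * (p / q + 2) * klFun (p / q))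
        = 2 * (p + 2 * q) * (q * klFun (p / q)) := by
      field_simp
    rwa [e1, e2] at h

/-- Pinsker's inequality for finitely supported distributions. -/
theorem sq_sum_abs_sub_le_two_mul_sum_mul_log_div {A : Type*} [Fintype A] {p q : A → ℝ}
    (hp0 : ∀ a, 0 ≤ p a) (hq0 : ∀ a, 0 ≤ q a) (hp1 : ∑ a, p a = 1) (hq1 : ∑ a, q a = 1)
    (habs : ∀ a, q a = 0 → p a = 0) :
    (∑ a, |p a - q a|) ^ 2 ≤ 2 * ∑ a, p a * log (p a / q a) := by
  have hCS := sum_sq_le_sum_mul_sum_of_sq_le_mul univ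
    (r := fun a => |p a - q a|) (f := fun a => 2 / 3 * (q a * klFun (p a / q a)))
    (g := fun a => p a + 2 * q a)
    (fun a _ => by have := klFun_nonneg (div_nonneg (hp0 a) (hq0 a)); have := hq0 a; positivity)
    (fun a _ => by have := hp0 a; have := hq0 a; positivity)
    (fun a _ => by
      rw [sq_abs]
      linarith [three_mul_sub_sq_le_mul_klFun (hp0 a) (hq0 a) (habs a)])
  have hg : ∑ a, (p a + 2 * q a) = 3 := by
    rw [sum_add_distrib, ← mul_sum, hp1, hq1]; norm_num
  have hf : ∑ a, q a * klFun (p a / q a) = ∑ a, p a * log (p a / q a) := by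
    simp only [fun a => mul_log_div_eq_mul_klFun (hq0 a) (habs a), sum_sub_distrib,
      sum_add_distrib, hp1, hq1, add_sub_cancel_right]
  rw [hg, ← mul_sum, hf] at hCS
  linarith

end Pinsker

section StochasticMatrix

variable {R : Type*} [CommRing R] [LinearOrder R] [IsStrictOrderedRing R]

theorem sum_abs_vecMul_le {m n : Type*} [Fintype m] [Fintype n] (v : m → R)
    (M : Matrix m n R) : ∑ j, |(v ᵥ* M) j| ≤ ∑ i, |v i| * ∑ j, |M i j| := by
  calc ∑ j, |(v ᵥ* M) j| ≤ ∑ j, ∑ i, |v i| * |M i j| := by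
        gcongr with j
        simp only [vecMul, dotProduct, ← abs_mul]
        exact abs_sum_le_sum_abs _ _
    _ = ∑ i, |v i| * ∑ j, |M i j| := by rw [sum_comm]; simp only [mul_sum]

variable {n : Type*} [Fintype n] [DecidableEq n]

theorem sum_abs_vecMul_sub_vecMul_le {K L : Matrix n n R} (hL : L ∈ rowStochastic R n) {δ : R}
    (hKL : ∀ i, ∑ j, |K i j - L i j| ≤ δ) {d e : n → R} (hd : ∀ i, 0 ≤ d i) :
    ∑ j, |(d ᵥ* K) j - (e ᵥ* L) j| ≤ ∑ i, |d i - e i| + δ * ∑ i, d i := by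
  have hsplit : d ᵥ* K - e ᵥ* L = (d - e) ᵥ* L + d ᵥ* (K - L) := by
    rw [sub_vecMul, vecMul_sub]; abel
  calc ∑ j, |(d ᵥ* K) j - (e ᵥ* L) j|
      ≤ ∑ j, |((d - e) ᵥ* L) j| + ∑ j, |(d ᵥ* (K - L)) j| := by
        rw [← sum_add_distrib]
        gcongr with j
        rw [← Pi.sub_apply (d ᵥ* K), hsplit, Pi.add_apply]
        exact abs_add_le _ _
    _ ≤ ∑ i, |d i - e i| * ∑ j, |L i j| + ∑ i, |d i| * ∑ j, |(K - L) i j| :=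
        add_le_add (sum_abs_vecMul_le _ _) (sum_abs_vecMul_le _ _)
    _ ≤ ∑ i, |d i - e i| + δ * ∑ i, d i := by
        simp only [abs_of_nonneg (nonneg_of_mem_rowStochastic hL),
          sum_row_of_mem_rowStochastic hL, mul_one, abs_of_nonneg (hd _), mul_sum]
        gcongr with i
        rw [← mul_sum, mul_comm δ]
        exact mul_le_mul_of_nonneg_left (hKL i) (hd i)

theorem vecMul_mem_stdSimplex {M : Matrix n n R} (hM : M ∈ rowStochastic R n) {x : n → R}
    (hx : x ∈ stdSimplex R n) : x ᵥ* M ∈ stdSimplex R n := by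
  refine ⟨nonneg_vecMul_of_mem_rowStochastic hM hx.1, ?_⟩
  rw [← dotProduct_one]
  exact vecMul_dotProduct_one_eq_one_rowStochastic hM (by rw [dotProduct_one, hx.2])

theorem sum_abs_sub_le_mul_of_vecMul {K L : Matrix n n R} (hK : K ∈ rowStochastic R n)
    (hL : L ∈ rowStochastic R n) {δ : R} (hKL : ∀ i, ∑ j, |K i j - L i j| ≤ δ)
    {d e : ℕ → n → R} (h0 : d 0 = e 0) (he0 : e 0 ∈ stdSimplex R n)
    (hd : ∀ t, d (t + 1) = d t ᵥ* K) (he : ∀ t, e (t + 1) = e t ᵥ* L) (t : ℕ) :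
    ∑ i, |d t i - e t i| ≤ t * δ := by
  have hsimplex : ∀ t, d t ∈ stdSimplex R n := by
    intro t
    induction t with
    | zero => exact h0 ▸ he0
    | succ t ih => exact hd t ▸ vecMul_mem_stdSimplex hK ih
  induction t with
  | zero => simp [h0]
  | succ t ih =>
    calc ∑ i, |d (t + 1) i - e (t + 1) i|
        ≤ ∑ i, |d t i - e t i| + δ * ∑ i, d t i := by
          rw [hd, he]
          exact sum_abs_vecMul_sub_vecMul_le hL hKL (hsimplex t).1
      _ ≤ (t + 1 : ℕ) * δ := by
          rw [(hsimplex t).2]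
          push_cast
          linarith

end StochasticMatrix

section Policy

variable {S A : Type*} [Fintype S] [Fintype A] {P : S → A → S → ℝ}

def policyTransition (P : S → A → S → ℝ) (π : S → A → ℝ) : Matrix S S ℝ :=
  of fun s s' => ∑ a, π s a * P s a s'

theorem policyTransition_mem_rowStochastic [DecidableEq S] (hP0 : ∀ s a s', 0 ≤ P s a s')
    (hP1 : ∀ s a, ∑ s', P s a s' = 1) {π : S → A → ℝ} (hπ0 : ∀ s a, 0 ≤ π s a)
    (hπ1 : ∀ s, ∑ a, π s a = 1) :
    policyTransition P π ∈ rowStochastic ℝ S := by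
  refine mem_rowStochastic_iff_sum.2 ⟨fun s s' => ?_, fun s => ?_⟩
  · exact sum_nonneg fun a _ => mul_nonneg (hπ0 s a) (hP0 s a s')
  · simp only [policyTransition, of_apply]
    rw [sum_comm]
    simp only [← mul_sum, hP1, mul_one, hπ1]

theorem sum_abs_policyTransition_sub_le (hP0 : ∀ s a s', 0 ≤ P s a s')
    (hP1 : ∀ s a, ∑ s', P s a s' = 1) (π π' : S → A → ℝ) (s : S) :
    ∑ s', |policyTransition P π s s' - policyTransition P π' s s'| ≤ ∑ a, |π s a - π' s a| :=
  calc ∑ s', |policyTransition P π s s' - policyTransition P π' s s'|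
      ≤ ∑ s', ∑ a, |π s a - π' s a| * P s a s' := by
        gcongr with s'
        simp only [policyTransition, of_apply, ← sum_sub_distrib, ← sub_mul]
        refine (abs_sum_le_sum_abs _ _).trans_eq ?_
        simp only [abs_mul, abs_of_nonneg (hP0 _ _ _)]
    _ = ∑ a, |π s a - π' s a| := by
        rw [sum_comm]
        simp only [← mul_sum, hP1, mul_one]

end Policy

theorem stmt7_general {S A : Type*} [Fintype S] [Fintype A]
    (P : S → A → S → ℝ) (π πref : S → A → ℝ) (ε ρ Cref : ℝ) (H : ℕ)
    (dπ dref : ℕ → S → ℝ) (dμ : S → ℝ)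
    (hP0 : ∀ s a s', 0 ≤ P s a s') (hP1 : ∀ s a, ∑ s', P s a s' = 1)
    (hπ0 : ∀ s a, 0 ≤ π s a) (hπ1 : ∀ s, ∑ a, π s a = 1)
    (href0 : ∀ s a, 0 ≤ πref s a) (href1 : ∀ s, ∑ a, πref s a = 1)
    (habs : ∀ s a, πref s a = 0 → π s a = 0)
    (hKL : ∀ s, ∑ a, π s a * Real.log (π s a / πref s a) ≤ ε)
    -- same initial distribution and recursions
    (hinit0 : ∀ s, 0 ≤ dref 0 s) (hinit1 : ∑ s, dref 0 s = 1)
    (h0 : ∀ s, dπ 0 s = dref 0 s)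
    (hrecπ : ∀ t s', dπ (t + 1) s' = ∑ s, dπ t s * ∑ a, π s a * P s a s')
    (hrecref : ∀ t s', dref (t + 1) s' = ∑ s, dref t s * ∑ a, πref s a * P s a s')
    -- ρ lower-bounds dμ on its support
    (hρ : 0 < ρ) (hρle : ∀ s, 0 < dμ s → ρ ≤ dμ s)
    -- C(π_ref) bound
    (hCref : ∀ t ≤ H, ∀ s, 0 < dμ s → dref t s / dμ s ≤ Cref) :
    ∀ t ≤ H, ∀ s, 0 < dμ s →
      dπ t s / dμ s ≤ Cref + (H : ℝ) * Real.sqrt (2 * ε) / ρ := by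
  classical
  intro t ht s hs
  have hTV (s : S) : ∑ s', |policyTransition P π s s' - policyTransition P πref s s'|
      ≤ Real.sqrt (2 * ε) :=
    (sum_abs_policyTransition_sub_le hP0 hP1 π πref s).trans <| Real.le_sqrt_of_sq_le <|
      (sq_sum_abs_sub_le_two_mul_sum_mul_log_div (hπ0 s) (href0 s) (hπ1 s) (href1 s)
        (habs s)).trans (by linarith [hKL s])
  have hℓ1 : ∑ s', |dπ t s' - dref t s'| ≤ t * Real.sqrt (2 * ε) :=
    sum_abs_sub_le_mul_of_vecMul (policyTransition_mem_rowStochastic hP0 hP1 hπ0 hπ1)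
      (policyTransition_mem_rowStochastic hP0 hP1 href0 href1) hTV (funext h0)
      ⟨hinit0, hinit1⟩ (fun t => funext (hrecπ t)) (fun t => funext (hrecref t)) t
  have hpoint : dπ t s ≤ dref t s + H * Real.sqrt (2 * ε) :=
    calc dπ t s ≤ dref t s + |dπ t s - dref t s| := by linarith [le_abs_self (dπ t s - dref t s)]
      _ ≤ dref t s + ∑ s', |dπ t s' - dref t s'| := by
          gcongr
          exact single_le_sum (f := fun s' => |dπ t s' - dref t s'|) (fun _ _ => abs_nonneg _)
            (mem_univ s)
      _ ≤ dref t s + H * Real.sqrt (2 * ε) := by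
          grw [hℓ1, show (t : ℝ) ≤ H by exact_mod_cast ht]
  calc dπ t s / dμ s ≤ (dref t s + H * Real.sqrt (2 * ε)) / dμ s := by gcongr
    _ = dref t s / dμ s + H * Real.sqrt (2 * ε) / dμ s := add_div _ _ _
    _ ≤ Cref + H * Real.sqrt (2 * ε) / ρ := by
        gcongr
        · exact hCref t ht s hs
        · exact hρle s hs

/-- KL regularization controls the occupancy mismatch:
`C(π) ≤ C(π_ref) + H·√(2ε)/ρ`, stated pointwise over the support of `dμ`. -/
theorem stmt7 {S A : Type*} [Fintype S] [Fintype A]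
    (P : S → A → S → ℝ) (π πref : S → A → ℝ) (ε ρ Cref : ℝ) (H : ℕ)
    (dπ dref : ℕ → S → ℝ) (dμ : S → ℝ)
    (hP0 : ∀ s a s', 0 ≤ P s a s') (hP1 : ∀ s a, ∑ s', P s a s' = 1)
    (hπ0 : ∀ s a, 0 ≤ π s a) (hπ1 : ∀ s, ∑ a, π s a = 1)
    (href0 : ∀ s a, 0 ≤ πref s a) (href1 : ∀ s, ∑ a, πref s a = 1)
    (habs : ∀ s a, πref s a = 0 → π s a = 0)
    (hKL : ∀ s, ∑ a, π s a * Real.log (π s a / πref s a) ≤ ε)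
    (hdμ0 : ∀ s, 0 ≤ dμ s) (hdμ1 : ∑ s, dμ s = 1)
    -- same initial distribution and recursions
    (hinit0 : ∀ s, 0 ≤ dref 0 s) (hinit1 : ∑ s, dref 0 s = 1)
    (h0 : ∀ s, dπ 0 s = dref 0 s)
    (hrecπ : ∀ t s', dπ (t + 1) s' = ∑ s, dπ t s * ∑ a, π s a * P s a s')
    (hrecref : ∀ t s', dref (t + 1) s' = ∑ s, dref t s * ∑ a, πref s a * P s a s')
    -- absolute continuity w.r.t. dμ for all steps up to H
    (habsref : ∀ t ≤ H, ∀ s, 0 < dref t s → 0 < dμ s)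
    (habsπ : ∀ t ≤ H, ∀ s, 0 < dπ t s → 0 < dμ s)
    -- ρ lower-bounds dμ on its support
    (hρ : 0 < ρ) (hρle : ∀ s, 0 < dμ s → ρ ≤ dμ s)
    -- C(π_ref) bound
    (hCref : ∀ t ≤ H, ∀ s, 0 < dμ s → dref t s / dμ s ≤ Cref) :
    ∀ t ≤ H, ∀ s, 0 < dμ s →
      dπ t s / dμ s ≤ Cref + (H : ℝ) * Real.sqrt (2 * ε) / ρ :=
  stmt7_general P π πref ε ρ Cref H dπ dref dμ hP0 hP1 hπ0 hπ1 href0 href1 habs hKL hinit0 hinit1 h0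
    hrecπ hrecref hρ hρle hCref
end
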